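/- arXiv:2303.06467 — 7 statements merged into one kernel-verified Lean document; each statement's English description precedes it below -/
import Mathlib

section
/- Let x, z ∈ ℝ with x² + z² - z = 0. Then the 4×4 matrix M with rows (x, -x, z, 1-z), (-x, x, 1-z, z), (z, 1-z, -x, x), (1-z, z, x, -x) is orthogonal. -/
open Matrix

theorem M_orthogonal (x z : ℝ) (h : x ^ 2 + z ^ 2 - z = 0)
    (M : Matrix (Fin 4) (Fin 4) ℝ)
    (hM : M = !![x, -x, z, 1 - z;
                 -x, x, 1 - z, z;
                 z, 1 - z, -x, x;
                 1 - z, z, x, -x]) :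
    Mᵀ * M = 1 := by
  subst hM
  ext i j
  fin_cases i <;> fin_cases j <;>
    simp [Matrix.mul_apply, Fin.sum_univ_succ, Matrix.one_apply] <;> nlinarith [sq_nonneg x, sq_nonneg z]
end

section
/- Suppose x, y, z, w ∈ ℂ satisfy x + y + z + w = 1, xy + zw = 0, and x² + y² + z² + w² = 1. Then either (x + y = 0, z + w = 1, and x² + z² - z = 0) or (z + w = 0, x + y = 1, and x² + z² - x = 0). -/
theorem system_reduction (x y z w : ℂ)
    (h1 : x + y + z + w = 1)
    (h2 : x * y + z * w = 0)
    (h3 : x ^ 2 + y ^ 2 + z ^ 2 + w ^ 2 = 1) :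
    (x + y = 0 ∧ z + w = 1 ∧ x ^ 2 + z ^ 2 - z = 0) ∨
    (z + w = 0 ∧ x + y = 1 ∧ x ^ 2 + z ^ 2 - x = 0) := by
  have h4 : (x + y) * (x + y - 1) = 0 := by
    linear_combination (1/2) * h3 + h2 - (1/2) * (z + w - x - y + 1) * h1
  rcases mul_eq_zero.mp h4 with hs | hs
  · left
    have ht : z + w = 1 := by linear_combination h1 - hs
    exact ⟨hs, ht, by linear_combination -h2 + x * hs + z * ht⟩
  · right
    have hx1 : x + y = 1 := by linear_combination hs
    have ht : z + w = 0 := by linear_combination h1 - hx1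
    exact ⟨ht, hx1, by linear_combination -h2 + x * hx1 + z * ht⟩
end

section
/- The set of 4×4 real matrices of the form xI + yP_{(12)(34)} + zP_{(1324)} + wP_{(1423)} with x + y = 1, z + w = 0, and x² + z² - x = 0 forms a group under matrix multiplication. -/
open Matrix

/-- Permutation matrix of `(12)(34)` (on indices `0,1,2,3`). -/
def P1234 : Matrix (Fin 4) (Fin 4) ℝ :=
  !![0, 1, 0, 0;
     1, 0, 0, 0;
     0, 0, 0, 1;
     0, 0, 1, 0]

/-- Permutation matrix of the 4-cycle `(1324)`, i.e. `1→3→2→4→1`. -/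
def P1324 : Matrix (Fin 4) (Fin 4) ℝ :=
  !![0, 0, 1, 0;
     0, 0, 0, 1;
     0, 1, 0, 0;
     1, 0, 0, 0]

/-- Permutation matrix of the 4-cycle `(1423)`, i.e. `1→4→2→3→1`. -/
def P1423 : Matrix (Fin 4) (Fin 4) ℝ :=
  !![0, 0, 0, 1;
     0, 0, 1, 0;
     1, 0, 0, 0;
     0, 1, 0, 0]

/-- The set `P_(34)·X₃` of orthogonal permutative matrices. -/
def G34X3 : Set (Matrix (Fin 4) (Fin 4) ℝ) :=
  {A | ∃ x y z w : ℝ, A = x • (1 : Matrix (Fin 4) (Fin 4) ℝ) + y • P1234 + z • P1324 + w • P1423 ∧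
    x + y = 1 ∧ z + w = 0 ∧ x ^ 2 + z ^ 2 - x = 0}

lemma one_eq_explicit : (1 : Matrix (Fin 4) (Fin 4) ℝ) =
    !![1, 0, 0, 0; 0, 1, 0, 0; 0, 0, 1, 0; 0, 0, 0, 1] := by
  ext i j
  fin_cases i <;> fin_cases j <;> simp [Matrix.one_apply, Matrix.vecHead, Matrix.vecTail]

set_option maxHeartbeats 1000000 in
lemma G_mul_formula (x y z w x' y' z' w' : ℝ) :
    (x • (1 : Matrix (Fin 4) (Fin 4) ℝ) + y • P1234 + z • P1324 + w • P1423) *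
      (x' • (1 : Matrix (Fin 4) (Fin 4) ℝ) + y' • P1234 + z' • P1324 + w' • P1423) =
    (x*x'+y*y'+z*w'+w*z') • (1 : Matrix (Fin 4) (Fin 4) ℝ)
      + (x*y'+y*x'+z*z'+w*w') • P1234
      + (x*z'+z*x'+y*w'+w*y') • P1324
      + (x*w'+w*x'+y*z'+z*y') • P1423 := by
  rw [one_eq_explicit]
  ext i j
  fin_cases i <;> fin_cases j <;>
    simp [Matrix.mul_apply, Fin.sum_univ_four, P1234, P1324, P1423, Matrix.vecHead,
      Matrix.vecTail] <;> ring

lemma comb_eq_one {a b c d : ℝ} (ha : a = 1) (hb : b = 0) (hc : c = 0) (hd : d = 0) :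
    a • (1 : Matrix (Fin 4) (Fin 4) ℝ) + b • P1234 + c • P1324 + d • P1423 = 1 := by
  subst ha hb hc hd; simp

theorem G34X3_is_group :
    (1 : Matrix (Fin 4) (Fin 4) ℝ) ∈ G34X3 ∧
    (∀ A ∈ G34X3, ∀ B ∈ G34X3, A * B ∈ G34X3) ∧
    (∀ A ∈ G34X3, ∃ B ∈ G34X3, A * B = 1 ∧ B * A = 1) := by
  refine ⟨⟨1, 0, 0, 0, by simp, by norm_num, by norm_num, by norm_num⟩, ?_, ?_⟩
  · rintro A ⟨x, y, z, w, rfl, hxy, hzw, hq⟩ B ⟨x', y', z', w', rfl, hxy', hzw', hq'⟩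
    have hy : y = 1 - x := by linarith
    have hw : w = -z := by linarith
    have hy' : y' = 1 - x' := by linarith
    have hw' : w' = -z' := by linarith
    subst hy hw hy' hw'
    exact ⟨x*x'+(1-x)*(1-x')+z*(-z')+(-z)*z', x*(1-x')+(1-x)*x'+z*z'+(-z)*(-z'),
        x*z'+z*x'+(1-x)*(-z')+(-z)*(1-x'), x*(-z')+(-z)*x'+(1-x)*z'+z*(1-x'),
        G_mul_formula x (1-x) z (-z) x' (1-x') z' (-z'), by ring, by ring,
        by linear_combination (4 * (x' ^ 2 + z' ^ 2 - x') + 1) * hq + hq'⟩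
  · rintro A ⟨x, y, z, w, rfl, hxy, hzw, hq⟩
    have hy : y = 1 - x := by linarith
    have hw : w = -z := by linarith
    subst hy hw
    refine ⟨x • (1 : Matrix (Fin 4) (Fin 4) ℝ) + (1-x) • P1234 + (-z) • P1324 + z • P1423,
      ⟨x, 1 - x, -z, z, rfl, by ring, by ring, by linear_combination hq⟩, ?_, ?_⟩
    · rw [G_mul_formula]
      exact comb_eq_one (by linear_combination 2*hq) (by linear_combination (-2)*hq)
        (by ring) (by ring)
    · rw [G_mul_formula]
      exact comb_eq_one (by linear_combination 2*hq) (by linear_combination (-2)*hq)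
        (by ring) (by ring)
end

section
/- The set of 4×4 complex orthogonal permutative matrices is not closed under matrix multiplication. -/
open Matrix

/-- A matrix is permutative if every row is a permutation of every other row. -/
def Permutative {n : ℕ} {R : Type*} (A : Matrix (Fin n) (Fin n) R) : Prop :=
  ∀ i j : Fin n, ∃ σ : Equiv.Perm (Fin n), ∀ k, A j k = A i (σ k)

/-- Orthogonal permutative matrices of order 4 over `ℂ`. -/
def OPM4 : Set (Matrix (Fin 4) (Fin 4) ℂ) :=
  {A | Aᵀ * A = 1 ∧ Permutative A}

/-!
Let `v = (-2/5, 1/5, 2/5, 4/5)` and `A i k = v (i + k)` with indices in `ℤ/4`. Every row of `A`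
is a cyclic shift of `v`, so `A` is permutative, and `A` is orthogonal because `v` has unit
length and is orthogonal to each of its nontrivial cyclic shifts. Swapping two rows of `A`
gives a matrix `B` that is again orthogonal and permutative. In `A * B`, however, the entry
`-11/25` of row `1` does not occur in row `0`.
-/

theorem Matrix.transpose_mul_self_submatrix_left {m n α : Type*} [Fintype m]
    [NonUnitalNonAssocSemiring α] (A : Matrix m n α) (e : m ≃ m) :
    (A.submatrix e id)ᵀ * A.submatrix e id = Aᵀ * A := by
  rw [transpose_submatrix, submatrix_mul_equiv, submatrix_id_id]

namespace Permutative

variable {n : ℕ} {R : Type*}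

theorem submatrix_left {A : Matrix (Fin n) (Fin n) R} (hA : Permutative A) (e : Fin n → Fin n) :
    Permutative (A.submatrix e id) :=
  fun i j => hA (e i) (e j)

theorem of_add [NeZero n] (v : Fin n → R) : Permutative (of fun i k => v (i + k)) := by
  intro i j
  refine ⟨Equiv.addRight (j - i), fun k => ?_⟩
  simp only [of_apply, Equiv.coe_addRight]
  congr 1
  abel

theorem not_of_forall_ne {A : Matrix (Fin n) (Fin n) R} (i j k : Fin n)
    (h : ∀ m, A i m ≠ A j k) : ¬Permutative A := by
  intro hA
  obtain ⟨σ, hσ⟩ := hA i j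
  exact h (σ k) (hσ k).symm

end Permutative

namespace OPM4

noncomputable def witnessA : Matrix (Fin 4) (Fin 4) ℂ :=
  of fun i k => ![-2/5, 1/5, 2/5, 4/5] (i + k)

noncomputable def witnessB : Matrix (Fin 4) (Fin 4) ℂ :=
  witnessA.submatrix (Equiv.swap 2 3) id

theorem witnessA_transpose_mul_self : witnessAᵀ * witnessA = 1 := by
  ext i j
  fin_cases i <;> fin_cases j <;> simp [witnessA, mul_apply, Fin.sum_univ_four, one_apply] <;>
    norm_num

theorem witnessA_mem : witnessA ∈ OPM4 :=
  ⟨witnessA_transpose_mul_self, Permutative.of_add _⟩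

theorem witnessB_mem : witnessB ∈ OPM4 :=
  ⟨(transpose_mul_self_submatrix_left _ _).trans witnessA_transpose_mul_self,
    witnessA_mem.2.submatrix_left _⟩

theorem witnessA_mul_witnessB : witnessA * witnessB =
    !![21/25, 12/25, -6/25, -2/25;
      12/25, -11/25, 18/25, 6/25;
      -6/25, 18/25, 16/25, -3/25;
      -2/25, 6/25, -3/25, 24/25] := by
  ext i j
  fin_cases i <;> fin_cases j <;> simp [witnessA, witnessB, mul_apply, Fin.sum_univ_four, Equiv.swap_apply_def] <;>
    norm_num

theorem not_permutative_witnessA_mul_witnessB : ¬Permutative (witnessA * witnessB) := by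
  rw [witnessA_mul_witnessB]
  refine Permutative.not_of_forall_ne 0 1 1 fun m => ?_
  fin_cases m <;> norm_num

end OPM4

open OPM4 in
theorem OPM4_not_closed_under_mul :
    ∃ A ∈ OPM4, ∃ B ∈ OPM4, A * B ∉ OPM4 :=
  ⟨witnessA, witnessA_mem, witnessB, witnessB_mem,
    fun h => not_permutative_witnessA_mul_witnessB h.2⟩
end

section
/- If A = αP + βQ is a real orthogonal matrix, where P and Q are distinct 4×4 permutation matrices, then α = 0 or β = 0 (and the nonzero coefficient is ±1). -/
open Matrix

/-- The permutation matrix of `σ`: entry `(i,j)` is `1` if `σ i = j`, else `0`. -/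
def permMat (n : ℕ) (σ : Equiv.Perm (Fin n)) : Matrix (Fin n) (Fin n) ℝ :=
  Matrix.of fun i j => if σ i = j then (1 : ℝ) else 0

lemma sum_ind (σ τ : Equiv.Perm (Fin 4)) (j j' : Fin 4) :
    ∑ k, (if σ k = j then (1:ℝ) else 0) * (if τ k = j' then 1 else 0)
      = if σ.symm j = τ.symm j' then 1 else 0 := by
  have h : ∀ k : Fin 4, (if σ k = j then (1:ℝ) else 0) * (if τ k = j' then 1 else 0)
      = if k = σ.symm j then (if σ.symm j = τ.symm j' then (1:ℝ) else 0) else 0 := by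
    intro k
    by_cases h1 : k = σ.symm j
    · subst h1
      simp [Equiv.apply_symm_apply, Equiv.apply_eq_iff_eq_symm_apply]
    · have : σ k ≠ j := fun hc => h1 (by rw [← hc, Equiv.symm_apply_apply])
      simp [this, h1]
  simp only [h, Finset.sum_ite_eq', Finset.mem_univ, if_true]

theorem no_orthogonal_combination_of_two (α β : ℝ) (p q : Equiv.Perm (Fin 4))
    (hpq : p ≠ q) (A : Matrix (Fin 4) (Fin 4) ℝ)
    (hA : A = α • permMat 4 p + β • permMat 4 q)
    (horth : Aᵀ * A = 1) :
    (α = 0 ∧ (β = 1 ∨ β = -1)) ∨ (β = 0 ∧ (α = 1 ∨ α = -1)) := by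
  obtain ⟨i, hi⟩ : ∃ i, p i ≠ q i := by
    by_contra h; push_neg at h; exact hpq (Equiv.ext h)
  have hentry : ∀ k j, A k j
      = α * (if p k = j then (1:ℝ) else 0) + β * (if q k = j then 1 else 0) := by
    intro k j; rw [hA]
    simp [permMat, Matrix.add_apply, Matrix.smul_apply, smul_eq_mul]
  have key : ∀ j j', (Aᵀ * A) j j' =
      α*α * (if p.symm j = p.symm j' then 1 else 0)
      + α*β * (if p.symm j = q.symm j' then 1 else 0)
      + β*α * (if q.symm j = p.symm j' then 1 else 0)
      + β*β * (if q.symm j = q.symm j' then 1 else 0) := by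
    intro j j'
    rw [Matrix.mul_apply]
    simp only [Matrix.transpose_apply, hentry]
    rw [← sum_ind p p j j', ← sum_ind p q j j', ← sum_ind q p j j', ← sum_ind q q j j']
    rw [Finset.mul_sum, Finset.mul_sum, Finset.mul_sum, Finset.mul_sum,
      ← Finset.sum_add_distrib, ← Finset.sum_add_distrib, ← Finset.sum_add_distrib]
    exact Finset.sum_congr rfl fun k _ => by ring
  have f2 : p.symm (q i) ≠ i := fun h => hi ((p.symm_apply_eq.mp h).symm)
  have f1 : i ≠ p.symm (q i) := fun h => f2 h.symm
  have f3 : q.symm (p i) ≠ i := fun h => hi (q.symm_apply_eq.mp h)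
  have f4 : i ≠ q.symm (p i) := fun h => f3 h.symm
  have e1 := key (p i) (q i)
  rw [horth, Matrix.one_apply_ne hi] at e1
  simp only [Equiv.symm_apply_apply, f1, f2, f3, if_false, if_true] at e1
  have hab : α * β = 0 := by
    by_cases hc : q.symm (p i) = p.symm (q i) <;>
      simp only [hc, f2, if_true, if_false, mul_zero, zero_mul, add_zero, zero_add] at e1 <;>
      nlinarith [e1]
  have e2 := key (p i) (p i)
  rw [horth, Matrix.one_apply_eq] at e2
  simp only [Equiv.symm_apply_apply, f3, f4, if_false, if_true] at e2
  have hsq : α*α + β*β = 1 := by linarith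
  rcases mul_eq_zero.mp hab with h | h
  · subst h
    exact Or.inl ⟨rfl, mul_self_eq_one_iff.mp (by nlinarith)⟩
  · subst h
    exact Or.inr ⟨rfl, mul_self_eq_one_iff.mp (by nlinarith)⟩
end

section
/- Every real linear combination of 4×4 permutation matrices can be written as a sum of at most 6 permutative matrices, each of which is a linear combination of 4 pairwise Hadamard-orthogonal permutation matrices. -/
/-!
Translating the values of a permutation of `Fin n` by a constant `m`, i.e. `σ ↦ (· + m) ∘ σ`,
makes the `n` permutations `(· + m) ∘ σ`, `m : Fin n`, pairwise disagree everywhere, and every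
permutation is uniquely such a translate of one fixing `0`. This splits `Sₙ` into `(n - 1)!` classes
of `n` Hadamard-orthogonal permutation matrices. Within a class, row `i` of `∑ₘ aₘ • P((· + m) ∘ σ)`
is `j ↦ a (j - σ i)`, so any two rows differ by a translation of the columns: the matrix is
permutative. For `n = 4` there are `3! = 6` classes.
-/

open Matrix

open Equiv

lemma permMat_apply {n : ℕ} (σ : Perm (Fin n)) (i j : Fin n) :
    permMat n σ i j = if σ i = j then 1 else 0 := rfl

lemma permMat_mul_permMat_apply_eq_zero {n : ℕ} {σ τ : Perm (Fin n)} (h : ∀ k, σ k ≠ τ k)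
    (k l : Fin n) : permMat n σ k l * permMat n τ k l = 0 := by
  by_cases hσ : σ k = l
  · simp [permMat_apply, hσ ▸ (h k).symm]
  · simp [permMat_apply, hσ]

section Shift

variable {n : ℕ} [NeZero n]

def shiftPerm (σ : Perm (Fin n)) (m : Fin n) : Perm (Fin n) :=
  σ.trans (Equiv.addRight m)

@[simp]
lemma shiftPerm_apply (σ : Perm (Fin n)) (m k : Fin n) : shiftPerm σ m k = σ k + m := rfl

lemma shiftPerm_apply_ne (σ : Perm (Fin n)) {m m' : Fin n} (h : m ≠ m') (k : Fin n) :
    shiftPerm σ m k ≠ shiftPerm σ m' k := by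
  simpa using h

lemma shiftPerm_injective (σ : Perm (Fin n)) : Function.Injective (shiftPerm σ) :=
  fun _ _ h => by_contra fun hne => shiftPerm_apply_ne σ hne 0 (congrArg (· 0) h)

def permEquivFixZeroProd : Perm (Fin n) ≃ {σ : Perm (Fin n) // σ 0 = 0} × Fin n where
  toFun π := (⟨shiftPerm π (-π 0), by simp⟩, π 0)
  invFun p := shiftPerm p.1 p.2
  left_inv π := by ext; simp
  right_inv p := by
    obtain ⟨⟨σ, hσ⟩, m⟩ := p
    ext <;> simp [hσ]

lemma card_perm_fixZero : Fintype.card {σ : Perm (Fin n) // σ 0 = 0} = (n - 1).factorial := by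
  have hcard := Fintype.card_congr (permEquivFixZeroProd (n := n))
  rw [Fintype.card_perm, Fintype.card_fin, Fintype.card_prod, Fintype.card_fin,
    ← Nat.mul_factorial_pred (NeZero.ne n), mul_comm] at hcard
  exact (Nat.eq_of_mul_eq_mul_right (Nat.pos_of_neZero n) hcard).symm

lemma sum_perm_eq_sum_sum_shiftPerm {M : Type*} [AddCommMonoid M] (f : Perm (Fin n) → M) :
    ∑ π, f π = ∑ σ : {σ : Perm (Fin n) // σ 0 = 0}, ∑ m, f (shiftPerm σ m) := by
  rw [← permEquivFixZeroProd.symm.sum_comp, Fintype.sum_prod_type]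
  rfl

lemma sum_smul_permMat_shiftPerm_apply (σ : Perm (Fin n)) (a : Fin n → ℝ) (i j : Fin n) :
    (∑ m, a m • permMat n (shiftPerm σ m)) i j = a (j - σ i) := by
  simp only [Matrix.sum_apply, Matrix.smul_apply, permMat_apply, shiftPerm_apply, smul_eq_mul,
    mul_ite, mul_one, mul_zero, ← eq_sub_iff_add_eq', Finset.sum_ite_eq', Finset.mem_univ,
    if_true]

lemma permutative_sum_smul_permMat_shiftPerm (σ : Perm (Fin n)) (a : Fin n → ℝ) :
    Permutative (∑ m, a m • permMat n (shiftPerm σ m)) := by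
  intro i j
  refine ⟨Equiv.addRight (σ i - σ j), fun l => ?_⟩
  simp only [sum_smul_permMat_shiftPerm_apply, coe_addRight]
  congr 1
  abel

end Shift

theorem lin_comb_decomposes_into_six_permutative
    (c : Equiv.Perm (Fin 4) → ℝ) :
    ∃ B : Fin 6 → Matrix (Fin 4) (Fin 4) ℝ,
      (∑ σ : Equiv.Perm (Fin 4), c σ • permMat 4 σ) = ∑ k, B k ∧
      ∀ k : Fin 6, Permutative (B k) ∧
        ∃ (τ : Fin 4 → Equiv.Perm (Fin 4)) (a : Fin 4 → ℝ),
          Function.Injective τ ∧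
          (∀ i j : Fin 4, i ≠ j →
            ∀ k' l : Fin 4, permMat 4 (τ i) k' l * permMat 4 (τ j) k' l = 0) ∧
          B k = ∑ i, a i • permMat 4 (τ i) := by
  let e : Fin 6 ≃ {σ : Perm (Fin 4) // σ 0 = 0} :=
    (Fintype.equivFinOfCardEq (card_perm_fixZero (n := 4))).symm
  refine ⟨fun k => ∑ m, c (shiftPerm (e k) m) • permMat 4 (shiftPerm (e k) m), ?_, fun k => ?_⟩
  · rw [sum_perm_eq_sum_sum_shiftPerm, ← e.sum_comp]
  · exact ⟨permutative_sum_smul_permMat_shiftPerm _ _, shiftPerm (e k), _,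
      shiftPerm_injective _,
      fun i j hij => permMat_mul_permMat_apply_eq_zero (shiftPerm_apply_ne _ hij), rfl⟩
end

section
/- Let A be a 4×4 real matrix each of whose rows is a permutation of (α+β, γ, 0, 0), of (α+γ, β, 0, 0), or of (α, β+γ, 0, 0), with α, β, γ real and all row sums and column sums equal to α+β+γ. If A is orthogonal and is a linear combination αP + βQ + γR of three distinct permutation matrices P, Q, R with P∘Q ≠ 0, Q∘R ≠ 0, R∘P ≠ 0, and P∘Q∘R = 0, then at least one of α, β, γ is zero. -/
open Matrix

lemma sqsum1 (a b : Fin 4) (h : a ≠ b) (x y z : ℝ) :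
    ∑ j : Fin 4, (x * (if a = j then (1:ℝ) else 0) + y * (if a = j then (1:ℝ) else 0)
      + z * (if b = j then (1:ℝ) else 0)) *
      (x * (if a = j then (1:ℝ) else 0) + y * (if a = j then (1:ℝ) else 0)
      + z * (if b = j then (1:ℝ) else 0)) = (x+y)^2 + z^2 := by
  fin_cases a <;> fin_cases b <;> simp_all [Fin.sum_univ_four] <;> ring

lemma sqsum2 (a b : Fin 4) (h : a ≠ b) (x y z : ℝ) :
    ∑ j : Fin 4, (x * (if a = j then (1:ℝ) else 0) + y * (if b = j then (1:ℝ) else 0)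
      + z * (if b = j then (1:ℝ) else 0)) *
      (x * (if a = j then (1:ℝ) else 0) + y * (if b = j then (1:ℝ) else 0)
      + z * (if b = j then (1:ℝ) else 0)) = x^2 + (y+z)^2 := by
  fin_cases a <;> fin_cases b <;> simp_all [Fin.sum_univ_four] <;> ring

lemma sqsum3 (a b : Fin 4) (h : a ≠ b) (x y z : ℝ) :
    ∑ j : Fin 4, (x * (if a = j then (1:ℝ) else 0) + y * (if b = j then (1:ℝ) else 0)
      + z * (if a = j then (1:ℝ) else 0)) *
      (x * (if a = j then (1:ℝ) else 0) + y * (if b = j then (1:ℝ) else 0)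
      + z * (if a = j then (1:ℝ) else 0)) = (x+z)^2 + y^2 := by
  fin_cases a <;> fin_cases b <;> simp_all [Fin.sum_univ_four] <;> ring

theorem three_perm_final_case (α β γ : ℝ) (p q r : Equiv.Perm (Fin 4))
    (hpq : p ≠ q) (hqr : q ≠ r) (hrp : r ≠ p)
    (A : Matrix (Fin 4) (Fin 4) ℝ)
    (hA : A = α • permMat 4 p + β • permMat 4 q + γ • permMat 4 r)
    (hrows : ∀ i : Fin 4, ∃ σ : Equiv.Perm (Fin 4),
      (fun k => A i (σ k)) = ![α + β, γ, 0, 0] ∨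
      (fun k => A i (σ k)) = ![α + γ, β, 0, 0] ∨
      (fun k => A i (σ k)) = ![α, β + γ, 0, 0])
    (hrowsum : ∀ i : Fin 4, ∑ j, A i j = α + β + γ)
    (hcolsum : ∀ j : Fin 4, ∑ i, A i j = α + β + γ)
    (horth : Aᵀ * A = 1)
    (hPQ : ∃ i j : Fin 4, permMat 4 p i j * permMat 4 q i j ≠ 0)
    (hQR : ∃ i j : Fin 4, permMat 4 q i j * permMat 4 r i j ≠ 0)
    (hRP : ∃ i j : Fin 4, permMat 4 r i j * permMat 4 p i j ≠ 0)
    (hPQR : ∀ i j : Fin 4, permMat 4 p i j * permMat 4 q i j * permMat 4 r i j = 0) :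
    α = 0 ∨ β = 0 ∨ γ = 0 := by
  -- rows are orthonormal
  have hAA : A * Aᵀ = 1 := mul_eq_one_comm.mp horth
  have hn : ∀ i : Fin 4, ∑ j, A i j * A i j = 1 := by
    intro i
    have h := congrFun (congrFun hAA i) i
    simpa [Matrix.mul_apply, Matrix.transpose_apply, Matrix.one_apply] using h
  -- the sum equation
  have hS : (α + β + γ)^2 = 1 := by
    have h1 : ∑ i, ∑ j, (Aᵀ * A) i j = (4:ℝ) := by
      rw [horth]
      simp [Matrix.one_apply, Fin.sum_univ_four]
    have h2 : ∑ i, ∑ j, (Aᵀ * A) i j = 4 * (α + β + γ)^2 := by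
      simp only [Matrix.mul_apply, Matrix.transpose_apply]
      calc ∑ i, ∑ j, ∑ k, A k i * A k j
          = ∑ i, ∑ k, ∑ j, A k i * A k j :=
            Finset.sum_congr rfl fun i _ => Finset.sum_comm
        _ = ∑ k, ∑ i, ∑ j, A k i * A k j := Finset.sum_comm
        _ = ∑ k : Fin 4, ∑ i : Fin 4, A k i * (α + β + γ) := by
            refine Finset.sum_congr rfl fun k _ => Finset.sum_congr rfl fun i _ => ?_
            rw [← Finset.mul_sum, hrowsum k]
        _ = ∑ k : Fin 4, (α + β + γ) * (α + β + γ) := by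
            refine Finset.sum_congr rfl fun k _ => ?_
            rw [← Finset.sum_mul, hrowsum k]
        _ = 4 * (α + β + γ)^2 := by simp [Fin.sum_univ_four]; ring
    linarith [h1, h2]
  -- extract the three coincidence rows
  obtain ⟨i1, j1, h1⟩ := hPQ
  obtain ⟨i2, j2, h2⟩ := hQR
  obtain ⟨i3, j3, h3⟩ := hRP
  simp only [permMat, Matrix.of_apply, ne_eq, mul_eq_zero, ite_eq_right_iff,
    one_ne_zero, imp_false, not_or, not_not] at h1 h2 h3
  have hq1 : q i1 = p i1 := h1.2.trans h1.1.symm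
  have hr2 : r i2 = q i2 := h2.2.trans h2.1.symm
  have hr3 : r i3 = p i3 := h3.1.trans h3.2.symm
  have hne1 : p i1 ≠ r i1 := by
    have := hPQR i1 (p i1)
    simp [permMat, hq1] at this
    exact fun h => this h.symm
  have hne2 : p i2 ≠ q i2 := by
    have := hPQR i2 (q i2)
    simp [permMat, hr2] at this
    exact this
  have hne3 : p i3 ≠ q i3 := by
    have := hPQR i3 (p i3)
    simp [permMat, hr3] at this
    exact fun h => this h.symm
  -- the three norm equations
  have hE1 : (α + β)^2 + γ^2 = 1 := by
    have h := hn i1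
    simp only [hA, Matrix.add_apply, Matrix.smul_apply, smul_eq_mul, permMat,
      Matrix.of_apply, hq1] at h
    rw [sqsum1 (p i1) (r i1) hne1 α β γ] at h
    exact h
  have hE2 : α^2 + (β + γ)^2 = 1 := by
    have h := hn i2
    simp only [hA, Matrix.add_apply, Matrix.smul_apply, smul_eq_mul, permMat,
      Matrix.of_apply, hr2] at h
    rw [sqsum2 (p i2) (q i2) hne2 α β γ] at h
    exact h
  have hE3 : (α + γ)^2 + β^2 = 1 := by
    have h := hn i3
    simp only [hA, Matrix.add_apply, Matrix.smul_apply, smul_eq_mul, permMat,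
      Matrix.of_apply, hr3] at h
    rw [sqsum3 (p i3) (q i3) hne3 α β γ] at h
    exact h
  -- algebra
  have k1 : β * (α - γ) = 0 := by linear_combination (hE1 - hE2) / 2
  have k2 : α * (β - γ) = 0 := by linear_combination (hE1 - hE3) / 2
  have k3 : γ * (α + β) = 0 := by linear_combination (hS - hE1) / 2
  rcases mul_eq_zero.mp k1 with hb | hac
  · exact Or.inr (Or.inl hb)
  rcases mul_eq_zero.mp k2 with ha | hbc
  · exact Or.inl ha
  rcases mul_eq_zero.mp k3 with hg | hab
  · exact Or.inr (Or.inr hg)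
  -- α = γ, β = γ, α + β = 0 → all zero
  have : α = 0 := by linarith [sub_eq_zero.mp hac, sub_eq_zero.mp hbc]
  exact Or.inl this
end
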